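/- Let 1 < a_1 < a_2 be integers. The currency A = (1, a_1, a_2) is orderly if and only if a_2 − a_1 ∈ 𝒜(a_1). -/

import Mathlib

/-- The largest coin of the currency with coins `a 0, …, a k` that is `≤ c`
(or `0` if there is none). -/
def bestCoin (a : ℕ → ℕ) (k : ℕ) (c : ℕ) : ℕ :=
  ((Finset.range (k + 1)).filter fun j => a j ≤ c).sup a

/-- The number of coins used by the greedy algorithm to pay the amount `c`,
using the currency with coins `a 0, …, a k`. -/
def grd (a : ℕ → ℕ) (k : ℕ) : ℕ → ℕ
  | 0 => 0
  | c + 1 =>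
    if h : 1 ≤ bestCoin a k (c + 1) then
      grd a k (c + 1 - bestCoin a k (c + 1)) + 1
    else 0
  decreasing_by omega

/-- The minimal number of coins needed to pay the amount `c`,
using the currency with coins `a 0, …, a k`. -/
noncomputable def opt (a : ℕ → ℕ) (k : ℕ) (c : ℕ) : ℕ :=
  sInf {n | ∃ x : Fin (k + 1) → ℕ, (∑ i, x i) = n ∧ (∑ i, x i * a i.1) = c}

/-- `a 0, …, a k` is a currency: it starts with the coin `1` and is strictly increasing. -/
def IsCurrency (a : ℕ → ℕ) (k : ℕ) : Prop :=
  a 0 = 1 ∧ ∀ i j : ℕ, i < j → j ≤ k → a i < a j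

/-- The currency with coins `a 0, …, a k` is orderly: the greedy payment is
optimal for every positive amount. -/
def Orderly (a : ℕ → ℕ) (k : ℕ) : Prop :=
  ∀ c : ℕ, 0 < c → opt a k c = grd a k c

/-- The set `𝒜(a) = ⋃_{m ≥ 1} {m·a − l : 0 ≤ l ≤ m}`. -/
def calA (a : ℕ) : Set ℕ :=
  {x | ∃ m l : ℕ, 1 ≤ m ∧ l ≤ m ∧ x = m * a - l}

/-!
Write `a₂ + l = (m + 1) * a₁` with `l < a₁`; then `a₂ - a₁ ∈ 𝒜(a₁)` means `l ≤ m`. If `l > m`,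
greedy pays `(m + 1) * a₁` with one `a₂` and `l` ones, more than the `m + 1` coins `a₁`.
If `l ≤ m`, the first greedy coin can always be taken out of an optimal payment at the cost of
one coin: an optimal payment of `c ≥ a₂` without `a₂` either contains `m + 1` coins `a₁`, which
can be exchanged for `a₂` and `l` ones, or at most `m` of them, and then paying `c - a₂` in ones
is already cheaper.
-/

section Currency

variable {a : ℕ → ℕ} {k c : ℕ}

theorem bestCoin_le : bestCoin a k c ≤ c :=
  Finset.sup_le fun _ hj => (Finset.mem_filter.1 hj).2

theorem bestCoin_eq {j : ℕ} (hj : j ≤ k) (hjc : a j ≤ c)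
    (hmax : ∀ i ≤ k, a i ≤ c → a i ≤ a j) : bestCoin a k c = a j :=
  le_antisymm
    (Finset.sup_le fun i hi => by
      simp only [Finset.mem_filter, Finset.mem_range] at hi
      exact hmax i (by omega) hi.2)
    (Finset.le_sup (f := a) (by simp only [Finset.mem_filter, Finset.mem_range]; omega))

theorem exists_bestCoin_eq (h0 : a 0 = 1) (hc : 0 < c) :
    ∃ j, j ≤ k ∧ bestCoin a k c = a j := by
  have hne : ((Finset.range (k + 1)).filter fun j => a j ≤ c).Nonempty :=
    ⟨0, Finset.mem_filter.2 ⟨Finset.mem_range.2 k.succ_pos, h0.trans_le hc⟩⟩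
  obtain ⟨j, hj, hjc⟩ := Finset.exists_mem_eq_sup _ hne a
  exact ⟨j, Nat.lt_succ_iff.1 (Finset.mem_range.1 (Finset.mem_filter.1 hj).1), hjc⟩

theorem one_le_bestCoin (h0 : a 0 = 1) (hc : 0 < c) : 1 ≤ bestCoin a k c :=
  h0 ▸ Finset.le_sup (f := a) (Finset.mem_filter.2 ⟨Finset.mem_range.2 k.succ_pos, h0.trans_le hc⟩)

theorem grd_zero : grd a k 0 = 0 := by
  rw [grd]

theorem grd_eq_grd_sub_bestCoin_add_one (h0 : a 0 = 1) (hc : 0 < c) :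
    grd a k c = grd a k (c - bestCoin a k c) + 1 := by
  obtain ⟨c, rfl⟩ := Nat.exists_eq_add_one_of_ne_zero hc.ne'
  rw [grd, dif_pos (one_le_bestCoin h0 hc)]

theorem opt_le (x : Fin (k + 1) → ℕ) : opt a k (∑ i, x i * a i) ≤ ∑ i, x i :=
  Nat.sInf_le ⟨x, rfl, rfl⟩

theorem opt_zero : opt a k 0 = 0 :=
  Nat.eq_zero_of_le_zero <| by simpa using opt_le (a := a) (0 : Fin (k + 1) → ℕ)

theorem exists_opt_eq (h0 : a 0 = 1) (c : ℕ) :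
    ∃ x : Fin (k + 1) → ℕ, ∑ i, x i = opt a k c ∧ ∑ i, x i * a i = c :=
  Nat.sInf_mem (s := {n | ∃ x : Fin (k + 1) → ℕ, ∑ i, x i = n ∧ ∑ i, x i * a i = c})
    ⟨c, Pi.single 0 c, by simp, by simp [Pi.single_apply, h0]⟩

theorem opt_le_opt_sub_add_one {j : ℕ} (h0 : a 0 = 1) (hj : j ≤ k) (hjc : a j ≤ c) :
    opt a k c ≤ opt a k (c - a j) + 1 := by
  obtain ⟨x, hcost, hval⟩ := exists_opt_eq (k := k) h0 (c - a j)
  let j' : Fin (k + 1) := ⟨j, Nat.lt_succ_of_le hj⟩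
  have := opt_le (a := a) (x + Pi.single j' 1)
  simp only [Pi.add_apply, add_mul, Finset.sum_add_distrib, hval, hcost] at this
  simpa [Pi.single_apply, j', Nat.sub_add_cancel hjc] using this

theorem orderly_of_opt_sub_bestCoin_lt (h0 : a 0 = 1)
    (h : ∀ c, 0 < c → opt a k (c - bestCoin a k c) < opt a k c) : Orderly a k := by
  suffices ∀ c, grd a k c = opt a k c from fun c _ => (this c).symm
  intro c
  induction c using Nat.strong_induction_on with
  | _ c ih =>
    rcases Nat.eq_zero_or_pos c with rfl | hc
    · rw [grd_zero, opt_zero]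
    obtain ⟨j, hj, hbest⟩ := exists_bestCoin_eq (k := k) h0 hc
    have hstep := ih (c - bestCoin a k c) (Nat.sub_lt hc (one_le_bestCoin h0 hc))
    have hle := opt_le_opt_sub_add_one h0 hj (hbest ▸ bestCoin_le)
    rw [← hbest] at hle
    have hlt := h c hc
    rw [grd_eq_grd_sub_bestCoin_add_one h0 hc]
    omega

end Currency

def threeCoins (a₁ a₂ : ℕ) : ℕ → ℕ := fun i => if i = 0 then 1 else if i = 1 then a₁ else a₂

section ThreeCoins

variable {a₁ a₂ c : ℕ}

@[simp] theorem threeCoins_zero : threeCoins a₁ a₂ 0 = 1 := rfl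

@[simp] theorem threeCoins_one : threeCoins a₁ a₂ 1 = a₁ := rfl

@[simp] theorem threeCoins_two : threeCoins a₁ a₂ 2 = a₂ := rfl

theorem bestCoin_threeCoins_of_lt (hc : 0 < c) (hca₁ : c < a₁) (h₁₂ : a₁ < a₂) :
    bestCoin (threeCoins a₁ a₂) 2 c = 1 :=
  bestCoin_eq (j := 0) (by omega) (by rw [threeCoins_zero]; omega) fun i hi hic => by
    interval_cases i <;>
      simp only [threeCoins_zero, threeCoins_one, threeCoins_two] at hic ⊢ <;> omega

theorem bestCoin_threeCoins_of_le_of_lt (h₁ : 0 < a₁) (hc : a₁ ≤ c) (hca₂ : c < a₂) :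
    bestCoin (threeCoins a₁ a₂) 2 c = a₁ :=
  bestCoin_eq (j := 1) (by omega) (by rwa [threeCoins_one]) fun i hi hic => by
    interval_cases i <;>
      simp only [threeCoins_zero, threeCoins_one, threeCoins_two] at hic ⊢ <;> omega

theorem bestCoin_threeCoins_of_le (h₁₂ : a₁ < a₂) (hc : a₂ ≤ c) :
    bestCoin (threeCoins a₁ a₂) 2 c = a₂ :=
  bestCoin_eq (j := 2) le_rfl (by rwa [threeCoins_two]) fun i hi hic => by
    interval_cases i <;>
      simp only [threeCoins_zero, threeCoins_one, threeCoins_two] at hic ⊢ <;> omega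

theorem sum_mul_threeCoins (x : Fin 3 → ℕ) :
    ∑ i, x i * threeCoins a₁ a₂ i = x 0 + x 1 * a₁ + x 2 * a₂ := by
  simp [Fin.sum_univ_three]

theorem opt_threeCoins_le {u v w : ℕ} (hval : u + v * a₁ + w * a₂ = c) :
    opt (threeCoins a₁ a₂) 2 c ≤ u + v + w := by
  have h := opt_le (a := threeCoins a₁ a₂) ![u, v, w]
  rw [sum_mul_threeCoins] at h
  simpa [Fin.sum_univ_three, hval] using h

theorem exists_opt_threeCoins_eq (c : ℕ) :
    ∃ u v w, u + v + w = opt (threeCoins a₁ a₂) 2 c ∧ u + v * a₁ + w * a₂ = c := by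
  obtain ⟨x, hcost, hval⟩ := exists_opt_eq (a := threeCoins a₁ a₂) (k := 2) rfl c
  rw [sum_mul_threeCoins] at hval
  exact ⟨x 0, x 1, x 2, by rwa [Fin.sum_univ_three] at hcost, hval⟩

theorem grd_threeCoins_of_lt (h₁₂ : a₁ < a₂) : ∀ c < a₁, grd (threeCoins a₁ a₂) 2 c = c := by
  intro c
  induction c with
  | zero => exact fun _ => grd_zero
  | succ c ih =>
    intro hc
    rw [grd_eq_grd_sub_bestCoin_add_one rfl c.succ_pos,
      bestCoin_threeCoins_of_lt c.succ_pos hc h₁₂, Nat.succ_sub_one, ih (by omega)]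

theorem opt_threeCoins_sub_bestCoin_lt_of_lt (h₁ : 0 < a₁) (h₁₂ : a₁ < a₂) (hc : 0 < c)
    (hca₂ : c < a₂) :
    opt (threeCoins a₁ a₂) 2 (c - bestCoin (threeCoins a₁ a₂) 2 c) <
      opt (threeCoins a₁ a₂) 2 c := by
  obtain ⟨u, v, w, hcost, hval⟩ := exists_opt_threeCoins_eq (a₁ := a₁) (a₂ := a₂) c
  rw [← hcost]
  have hw : w = 0 := by
    by_contra hw
    nlinarith [Nat.le_mul_of_pos_left a₂ (Nat.pos_of_ne_zero hw)]
  subst hw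
  rcases lt_or_ge c a₁ with hca₁ | hca₁
  · have hv : v = 0 := by
      by_contra hv
      nlinarith [Nat.le_mul_of_pos_left a₁ (Nat.pos_of_ne_zero hv)]
    subst hv
    rw [bestCoin_threeCoins_of_lt hc hca₁ h₁₂]
    exact (opt_threeCoins_le (u := c - 1) (v := 0) (w := 0) (by simp)).trans_lt (by omega)
  rw [bestCoin_threeCoins_of_le_of_lt h₁ hca₁ hca₂]
  rcases Nat.eq_zero_or_pos v with rfl | hv
  · exact (opt_threeCoins_le (u := c - a₁) (v := 0) (w := 0) (by simp)).trans_lt (by omega)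
  · have : (v - 1) * a₁ = v * a₁ - a₁ := Nat.sub_one_mul v a₁
    exact (opt_threeCoins_le (u := u) (v := v - 1) (w := 0) (by
      simp only [zero_mul, add_zero] at hval ⊢
      have := Nat.le_mul_of_pos_left a₁ hv
      omega)).trans_lt (by omega)

theorem opt_threeCoins_sub_lt_of_le {m l : ℕ} (h₁ : 0 < a₁) (hlm : l ≤ m)
    (hkey : a₂ + l = (m + 1) * a₁) (hc : a₂ ≤ c) :
    opt (threeCoins a₁ a₂) 2 (c - a₂) < opt (threeCoins a₁ a₂) 2 c := by
  obtain ⟨u, v, w, hcost, hval⟩ := exists_opt_threeCoins_eq (a₁ := a₁) (a₂ := a₂) c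
  rw [← hcost]
  rcases Nat.eq_zero_or_pos w with rfl | hw
  · simp only [zero_mul, add_zero] at hval
    rcases lt_or_ge m v with hmv | hvm
    · -- trade `m + 1` coins `a₁` for one coin `a₂` and `l` coins `1`
      have : v * a₁ = (v - (m + 1)) * a₁ + (m + 1) * a₁ := by
        rw [← add_mul, Nat.sub_add_cancel hmv]
      exact (opt_threeCoins_le (u := u + l) (v := v - (m + 1)) (w := 0)
        (by omega)).trans_lt (by omega)
    · obtain ⟨d, rfl⟩ := Nat.exists_eq_add_of_le hvm
      have : v * a₁ < v + a₂ := by nlinarith [Nat.le_mul_of_pos_right d h₁]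
      exact (opt_threeCoins_le (u := c - a₂) (v := 0) (w := 0) (by simp)).trans_lt (by omega)
  · have : (w - 1) * a₂ = w * a₂ - a₂ := Nat.sub_one_mul w a₂
    have := Nat.le_mul_of_pos_left a₂ hw
    exact (opt_threeCoins_le (u := u) (v := v) (w := w - 1) (by omega)).trans_lt (by omega)

theorem orderly_threeCoins {m l : ℕ} (h₁₂ : a₁ < a₂) (hlm : l ≤ m)
    (hkey : a₂ + l = (m + 1) * a₁) : Orderly (threeCoins a₁ a₂) 2 := by
  have h₁ : 0 < a₁ := Nat.pos_of_mul_pos_left (a := m + 1) (by omega)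
  refine orderly_of_opt_sub_bestCoin_lt rfl fun c hc => ?_
  rcases lt_or_ge c a₂ with hca₂ | hca₂
  · exact opt_threeCoins_sub_bestCoin_lt_of_lt h₁ h₁₂ hc hca₂
  · rw [bestCoin_threeCoins_of_le h₁₂ hca₂]
    exact opt_threeCoins_sub_lt_of_le h₁ hlm hkey hca₂

theorem le_of_orderly_threeCoins {m l : ℕ} (h₁₂ : a₁ < a₂) (hord : Orderly (threeCoins a₁ a₂) 2)
    (hl : l < a₁) (hkey : a₂ + l = (m + 1) * a₁) : l ≤ m := by
  have hc : a₂ ≤ (m + 1) * a₁ := by omega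
  have hgrd : grd (threeCoins a₁ a₂) 2 ((m + 1) * a₁) = l + 1 := by
    rw [grd_eq_grd_sub_bestCoin_add_one rfl (by omega), bestCoin_threeCoins_of_le h₁₂ hc,
      ← hkey, Nat.add_sub_cancel_left, grd_threeCoins_of_lt h₁₂ l hl]
  have hopt : opt (threeCoins a₁ a₂) 2 ((m + 1) * a₁) ≤ m + 1 := by
    simpa using opt_threeCoins_le (a₁ := a₁) (a₂ := a₂) (u := 0) (v := m + 1) (w := 0) rfl
  have := hord ((m + 1) * a₁) (by omega)
  omega

end ThreeCoins

theorem exists_add_eq_succ_mul {a b : ℕ} (ha : 0 < a) (hb : 0 < b) :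
    ∃ m l, l < a ∧ b + l = (m + 1) * a := by
  refine ⟨(b - 1) / a, a - 1 - (b - 1) % a, by omega, ?_⟩
  have := Nat.div_add_mod (b - 1) a
  have := Nat.mod_lt (b - 1) ha
  rw [add_one_mul, mul_comm]
  omega

theorem sub_mem_calA_iff {a b : ℕ} (hab : a < b) :
    b - a ∈ calA a ↔ ∃ m l, l ≤ m ∧ b + l = (m + 1) * a := by
  constructor
  · rintro ⟨m, l, -, hlm, he⟩
    exact ⟨m, l, hlm, by rw [add_one_mul]; omega⟩
  · rintro ⟨m, l, hlm, hkey⟩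
    rw [add_one_mul] at hkey
    refine ⟨m, l, Nat.pos_of_ne_zero ?_, hlm, by omega⟩
    rintro rfl
    omega

/-- The three-coin currency `(1, a₁, a₂)` is orderly iff `a₂ - a₁ ∈ 𝒜(a₁)`. -/
theorem three_coin_orderly_iff (a₁ a₂ : ℕ) (h1 : 1 < a₁) (h2 : a₁ < a₂) :
    Orderly (fun i => if i = 0 then 1 else if i = 1 then a₁ else a₂) 2 ↔
      a₂ - a₁ ∈ calA a₁ := by
  change Orderly (threeCoins a₁ a₂) 2 ↔ _
  rw [sub_mem_calA_iff h2]
  constructor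
  · intro hord
    obtain ⟨m, l, hl, hkey⟩ := exists_add_eq_succ_mul (by omega : 0 < a₁) (by omega : 0 < a₂)
    exact ⟨m, l, le_of_orderly_threeCoins h2 hord hl hkey, hkey⟩
  · rintro ⟨m, l, hlm, hkey⟩
    exact orderly_threeCoins h2 hlm hkey
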